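/- For μ ≥ -1/2, the function z ↦ √z · J_μ(z) is bounded on (0,∞), where J_μ is the Bessel function of the first kind of order μ. -/

import Mathlib

open MeasureTheory Filter Set

/-- Bessel function of the first kind of order `μ`. -/
noncomputable def besselJ (μ x : ℝ) : ℝ :=
  (x / 2) ^ μ *
    ∑' n : ℕ, ((-1 : ℝ) ^ n / ((n.factorial : ℝ) * Real.Gamma (μ + n + 1))) * (x / 2) ^ (2 * n)

/-- The constant `C_{α,μ} = e^{i(1+μ)(π/2-α)}/ sin α`. -/
noncomputable def Cst (α μ : ℝ) : ℂ :=
  Complex.exp (Complex.I * ((1 + μ) * (Real.pi / 2 - α) : ℝ)) / (Real.sin α : ℂ)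

/-- The fractional Hankel transform kernel (for `α ≠ π/2`),
`K_α(x,ξ) = C_{α,μ} e^{-i(x²+ξ²)c₁/2} √(xξc₂) J_μ(xξc₂)` with `c₁ = cot α`, `c₂ = csc α`. -/
noncomputable def frhtKernel (α μ x ξ : ℝ) : ℂ :=
  Cst α μ * Complex.exp (-Complex.I * (((x ^ 2 + ξ ^ 2) / 2 * Real.cot α : ℝ) : ℂ)) *
    ((Real.sqrt (x * ξ * (Real.sin α)⁻¹) * besselJ μ (x * ξ * (Real.sin α)⁻¹) : ℝ) : ℂ)

/-- The fractional Hankel transform of a function. -/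
noncomputable def frht (α μ : ℝ) (f : ℝ → ℂ) (ξ : ℝ) : ℂ :=
  ∫ x in Set.Ioi (0 : ℝ), frhtKernel α μ x ξ * f x

/-- The classical Hankel transform of order `μ`. -/
noncomputable def hankel (μ : ℝ) (g : ℝ → ℂ) (ξ : ℝ) : ℂ :=
  ∫ x in Set.Ioi (0 : ℝ), ((Real.sqrt (x * ξ) * besselJ μ (x * ξ) : ℝ) : ℂ) * g x

/-- `H(μ,η) = Γ(1+μ/2-η/2)/(2^{η-1} Γ(μ/2+η/2))`. -/
noncomputable def Hconst (μ η : ℝ) : ℝ :=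
  Real.Gamma (1 + μ / 2 - η / 2) / (2 ^ (η - 1) * Real.Gamma (μ / 2 + η / 2))

/-- `L` is slowly varying at the origin. -/
def SlowlyVaryingAtZero (L : ℝ → ℝ) : Prop :=
  ∀ a > 0, Filter.Tendsto (fun ε => L (a * ε) / L ε) (nhdsWithin 0 (Set.Ioi 0)) (nhds 1)

/-!
Write `√z J_μ(z) = 2^(-μ) v(z)` with `v(z) = z^(μ+1/2) G(z²/4)`, where
`G(t) = ∑ (-1)ⁿ tⁿ / (n! Γ(μ+n+1))` is entire. Near `0`, `v` is bounded because `μ + 1/2 ≥ 0`.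
Since `G` solves `t G'' + (μ+1) G' + G = 0`, `v` solves the Bessel equation in normal form
`v'' + (1 - c/z²) v = 0` with `c = μ² - 1/4`. The energy `E = v'² + v²` then satisfies
`E' = 2c v v'/z² ≤ |c| E/z²`, so `E(z) e^(|c|/z)` is nonincreasing and `v` stays bounded
on `[1, ∞)`.
-/

def derivCoeff (b : ℕ → ℝ) (n : ℕ) : ℝ := (n + 1) * b (n + 1)

noncomputable def powerSum (b : ℕ → ℝ) (t : ℝ) : ℝ := ∑' n, b n * t ^ n

def FactorialBounded (b : ℕ → ℝ) : Prop := ∃ c, ∀ n, |b n| ≤ c / n.factorial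

namespace FactorialBounded

variable {b : ℕ → ℝ}

theorem derivCoeff (hb : FactorialBounded b) : FactorialBounded (derivCoeff b) := by
  obtain ⟨c, hc⟩ := hb
  refine ⟨c, fun n => ?_⟩
  have hn : (0 : ℝ) < n + 1 := by positivity
  calc |_root_.derivCoeff b n| = (n + 1) * |b (n + 1)| := by
        rw [_root_.derivCoeff, abs_mul, abs_of_pos hn]
    _ ≤ (n + 1) * (c / (n + 1).factorial) := by gcongr; exact hc _
    _ = c / n.factorial := by
        rw [Nat.factorial_succ, Nat.cast_mul]; push_cast; field_simp

theorem summable (hb : FactorialBounded b) (t : ℝ) : Summable fun n => b n * t ^ n := by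
  obtain ⟨c, hc⟩ := hb
  refine .of_norm_bounded ((Real.summable_pow_div_factorial |t|).mul_left c) fun n => ?_
  calc ‖b n * t ^ n‖ = |b n| * |t| ^ n := by
        rw [norm_mul, norm_pow, Real.norm_eq_abs, Real.norm_eq_abs]
    _ ≤ c / n.factorial * |t| ^ n := by gcongr; exact hc n
    _ = c * (|t| ^ n / n.factorial) := by ring

theorem norm_mul_deriv_pow_le (hb : FactorialBounded b) : ∃ c, ∀ {R y : ℝ}, 1 ≤ R → |y| ≤ R →
    ∀ n, ‖b n * (n * y ^ (n - 1))‖ ≤ c * (2 * R) ^ n / n.factorial := by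
  obtain ⟨c, hc⟩ := hb
  refine ⟨c, fun {R y} hR hy n => ?_⟩
  have hc0 : 0 ≤ c := (abs_nonneg _).trans ((hc 0).trans_eq (by simp))
  have hn : (n : ℝ) ≤ 2 ^ n := by exact_mod_cast Nat.lt_two_pow_self.le
  have hyR : |y| ^ (n - 1) ≤ R ^ n :=
    (pow_le_pow_left₀ (abs_nonneg y) hy _).trans (pow_le_pow_right₀ hR (Nat.sub_le n 1))
  calc ‖b n * (n * y ^ (n - 1))‖ = |b n| * (n * |y| ^ (n - 1)) := by
        rw [norm_mul, norm_mul, norm_pow, Real.norm_natCast, Real.norm_eq_abs, Real.norm_eq_abs]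
    _ ≤ c / n.factorial * (2 ^ n * R ^ n) := by gcongr; exact hc n
    _ = c * (2 * R) ^ n / n.factorial := by ring

theorem hasDerivAt_powerSum (hb : FactorialBounded b) (t : ℝ) :
    HasDerivAt (powerSum b) (powerSum (_root_.derivCoeff b) t) t := by
  obtain ⟨c, hc⟩ := hb.norm_mul_deriv_pow_le
  set R := |t| + 1
  have hR : 1 ≤ R := by simp [R]
  have ht : t ∈ Ioo (-R) R := abs_lt.mp (by simp [R])
  have hsum : Summable fun n => c * (2 * R) ^ n / n.factorial :=
    ((Real.summable_pow_div_factorial (2 * R)).mul_left c).congr fun n => by ring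
  have hderiv := hasDerivAt_tsum_of_isPreconnected hsum isOpen_Ioo
    (convex_Ioo _ _).isPreconnected (fun n y _ => (hasDerivAt_pow n y).const_mul (b n))
    (fun n y hy => hc hR (abs_le.mpr ⟨hy.1.le, hy.2.le⟩) n) ht (hb.summable t) ht
  refine hderiv.congr_deriv ?_
  rw [(Summable.of_norm_bounded hsum fun n => hc hR (abs_lt.mpr ht).le n).tsum_eq_zero_add]
  simp only [powerSum, _root_.derivCoeff, CharP.cast_eq_zero, zero_mul, mul_zero, zero_add,
    Nat.cast_add, Nat.cast_one, Nat.add_sub_cancel]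
  exact tsum_congr fun n => by ring

theorem continuous_powerSum (hb : FactorialBounded b) : Continuous (powerSum b) :=
  continuous_iff_continuousAt.mpr fun t => (hb.hasDerivAt_powerSum t).continuousAt

end FactorialBounded

theorem hasSum_mul_powerSum_derivCoeff {b : ℕ → ℝ} (hb : FactorialBounded b) (t : ℝ) :
    HasSum (fun n => n * b n * t ^ n) (t * powerSum (derivCoeff b) t) := by
  rw [← hasSum_nat_add_iff' 1]
  simp only [Finset.range_one, Finset.sum_singleton, CharP.cast_eq_zero, zero_mul, sub_zero]
  refine ((hb.derivCoeff.summable t).hasSum.mul_left t).congr_fun fun n => ?_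
  simp only [derivCoeff]
  push_cast
  ring

theorem Real.Gamma_le_Gamma_add_nat {x : ℝ} (hx : 1 ≤ x) (n : ℕ) :
    Real.Gamma x ≤ Real.Gamma (x + n) := by
  induction n with
  | zero => simp
  | succ n ih =>
    have hxn : 1 ≤ x + n := le_add_of_le_of_nonneg hx n.cast_nonneg
    calc Real.Gamma x ≤ Real.Gamma (x + n) := ih
      _ ≤ (x + n) * Real.Gamma (x + n) :=
          le_mul_of_one_le_left (Real.Gamma_pos_of_pos (by linarith)).le hxn
      _ = Real.Gamma (x + ↑(n + 1)) := by
          rw [Nat.cast_succ, ← add_assoc, Real.Gamma_add_one (by linarith)]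

theorem sq_le_of_hasDerivAt_of_ode {v w : ℝ → ℝ} {a c z : ℝ} (ha : 0 < a)
    (hv : ∀ y ≥ a, HasDerivAt v (w y) y) (hw : ∀ y ≥ a, HasDerivAt w ((c / y ^ 2 - 1) * v y) y)
    (hz : a ≤ z) : v z ^ 2 ≤ (w a ^ 2 + v a ^ 2) * Real.exp (|c| / a) := by
  set W := fun y => (w y ^ 2 + v y ^ 2) * Real.exp (|c| / y)
  set W' := fun y => (2 * c * v y * w y - |c| * (w y ^ 2 + v y ^ 2)) / y ^ 2 * Real.exp (|c| / y)
  have hW : ∀ y ≥ a, HasDerivAt W (W' y) y := by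
    intro y hy
    have hy0 : y ≠ 0 := (ha.trans_le hy).ne'
    have hexp := ((hasDerivAt_inv hy0).const_mul |c|).exp
    refine ((((hw y hy).pow 2).add ((hv y hy).pow 2)).mul hexp).congr_deriv ?_
    simp only [W', Pi.add_apply, Pi.pow_apply, div_eq_mul_inv]
    field_simp
    ring
  have hW'_nonpos : ∀ y, W' y ≤ 0 := by
    intro y
    refine mul_nonpos_of_nonpos_of_nonneg (div_nonpos_of_nonpos_of_nonneg ?_ (sq_nonneg y))
      (Real.exp_pos _).le
    nlinarith [mul_nonneg (sub_nonneg.mpr (le_abs_self c)) (sq_nonneg (v y + w y)),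
      mul_nonneg (neg_le_iff_add_nonneg.mp (neg_abs_le c)) (sq_nonneg (v y - w y))]
  have hW_anti : AntitoneOn W (Ici a) := by
    refine antitoneOn_of_hasDerivWithinAt_nonpos (f' := W') (convex_Ici a)
      (fun y hy => (hW y hy).continuousAt.continuousWithinAt) (fun y hy => ?_) (fun y hy => ?_)
    all_goals rw [interior_Ici] at hy
    · exact (hW y hy.le).hasDerivWithinAt
    · exact hW'_nonpos y
  calc v z ^ 2 ≤ W z := by
        have := Real.one_le_exp (div_nonneg (abs_nonneg c) (ha.le.trans hz))
        nlinarith [sq_nonneg (w z), sq_nonneg (v z)]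
    _ ≤ W a := hW_anti self_mem_Ici hz hz

-- Liouville substitution: if `g'' + (2p/z) g' + g = 0`, then `v = y ^ p * g` satisfies
-- `v'' = (p (p - 1) / z ^ 2 - 1) v`; the function differentiated here is `v'`.
theorem hasDerivAt_deriv_rpow_mul_of_ode {p z : ℝ} {g g' : ℝ → ℝ} (hz : 0 < z)
    (hg : HasDerivAt g (g' z) z) (hg' : HasDerivAt g' (-(2 * p / z) * g' z - g z) z) :
    HasDerivAt (fun y => p * y ^ (p - 1) * g y + y ^ p * g' y)
      ((p * (p - 1) / z ^ 2 - 1) * (z ^ p * g z)) z := by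
  have hpow (q : ℝ) : HasDerivAt (fun y => y ^ q) (q * z ^ (q - 1)) z :=
    Real.hasDerivAt_rpow_const (Or.inl hz.ne')
  refine ((((hpow (p - 1)).const_mul p).mul hg).add ((hpow p).mul hg')).congr_deriv ?_
  have h1 : z ^ (p - 1) = z ^ (p - 1 - 1) * z := by rw [← Real.rpow_add_one hz.ne']; ring_nf
  have h2 : z ^ p = z ^ (p - 1 - 1) * z ^ 2 := by
    rw [← Real.rpow_natCast, ← Real.rpow_add hz]; ring_nf
  rw [h1, h2]
  field_simp
  ring

section Bessel

variable {μ : ℝ}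

noncomputable def besselCoeff (μ : ℝ) (n : ℕ) : ℝ :=
  (-1) ^ n / ((n.factorial : ℝ) * Real.Gamma (μ + n + 1))

theorem factorialBounded_besselCoeff (hμ : -1 < μ) : FactorialBounded (besselCoeff μ) := by
  refine ⟨max (Real.Gamma (μ + 1))⁻¹ (Real.Gamma (μ + 2))⁻¹, fun n => ?_⟩
  have hΓ : 0 < Real.Gamma (μ + n + 1) :=
    Real.Gamma_pos_of_pos (by linarith [n.cast_nonneg (α := ℝ)])
  rw [besselCoeff, abs_div, abs_pow, abs_neg, abs_one, one_pow, abs_of_pos (by positivity),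
    one_div, mul_inv, mul_comm, div_eq_mul_inv]
  gcongr
  rcases n with _ | n
  · simp
  · refine le_max_of_le_right (inv_anti₀ (Real.Gamma_pos_of_pos (by linarith)) ?_)
    rw [show μ + ↑(n + 1) + 1 = μ + 2 + n by push_cast; ring]
    exact Real.Gamma_le_Gamma_add_nat (by linarith) n

theorem besselCoeff_recurrence (hμ : -1 < μ) (n : ℕ) :
    (n + 1) * (μ + n + 1) * besselCoeff μ (n + 1) + besselCoeff μ n = 0 := by
  have harg : 0 < μ + n + 1 := by linarith [n.cast_nonneg (α := ℝ)]
  have hΓ : Real.Gamma (μ + ↑(n + 1) + 1) = (μ + n + 1) * Real.Gamma (μ + n + 1) := by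
    rw [← Real.Gamma_add_one harg.ne']
    congr 1
    push_cast
    ring
  have := (Real.Gamma_pos_of_pos harg).ne'
  rw [besselCoeff, besselCoeff, hΓ, Nat.factorial_succ, pow_succ]
  push_cast
  field_simp
  ring

theorem powerSum_besselCoeff_ode (hμ : -1 < μ) (t : ℝ) :
    t * powerSum (derivCoeff (derivCoeff (besselCoeff μ))) t
      + (μ + 1) * powerSum (derivCoeff (besselCoeff μ)) t + powerSum (besselCoeff μ) t = 0 := by
  have hb := factorialBounded_besselCoeff hμ
  have h := ((hasSum_mul_powerSum_derivCoeff hb.derivCoeff t).add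
    ((hb.derivCoeff.summable t).hasSum.mul_left (μ + 1))).add (hb.summable t).hasSum
  refine h.unique (hasSum_zero.congr_fun fun n => ?_)
  simp only [derivCoeff]
  linear_combination t ^ n * besselCoeff_recurrence hμ n

-- `(z / 2) ^ (-μ) * J_μ z`
noncomputable def besselReduced (μ z : ℝ) : ℝ := powerSum (besselCoeff μ) (z ^ 2 / 4)

-- `(z / 2) ^ (-μ) * J_μ z`
noncomputable def besselReducedDeriv (μ z : ℝ) : ℝ :=
  z / 2 * powerSum (derivCoeff (besselCoeff μ)) (z ^ 2 / 4)

theorem hasDerivAt_sq_div_four (z : ℝ) : HasDerivAt (fun y : ℝ => y ^ 2 / 4) (z / 2) z := by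
  refine ((hasDerivAt_pow 2 z).div_const 4).congr_deriv ?_
  norm_num
  ring

theorem hasDerivAt_besselReduced (hμ : -1 < μ) (z : ℝ) :
    HasDerivAt (besselReduced μ) (besselReducedDeriv μ z) z := by
  have h := ((factorialBounded_besselCoeff hμ).hasDerivAt_powerSum (z ^ 2 / 4)).comp z
    (hasDerivAt_sq_div_four z)
  rw [besselReducedDeriv, mul_comm]
  exact h

theorem hasDerivAt_besselReducedDeriv (hμ : -1 < μ) {z : ℝ} (hz : z ≠ 0) :
    HasDerivAt (besselReducedDeriv μ)
      (-(2 * (μ + 1 / 2) / z) * besselReducedDeriv μ z - besselReduced μ z) z := by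
  have h := ((factorialBounded_besselCoeff hμ).derivCoeff.hasDerivAt_powerSum (z ^ 2 / 4)).comp z
    (hasDerivAt_sq_div_four z)
  have hode := powerSum_besselCoeff_ode hμ (z ^ 2 / 4)
  refine ((hasDerivAt_id z).div_const 2 |>.mul h).congr_deriv ?_
  simp only [besselReducedDeriv, besselReduced, Function.comp_apply, id]
  field_simp
  linear_combination 4 * hode

noncomputable def besselNormal (μ z : ℝ) : ℝ := z ^ (μ + 1 / 2) * besselReduced μ z

noncomputable def besselNormalDeriv (μ z : ℝ) : ℝ :=
  (μ + 1 / 2) * z ^ (μ + 1 / 2 - 1) * besselReduced μ z + z ^ (μ + 1 / 2) * besselReducedDeriv μ z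

theorem hasDerivAt_besselNormal (hμ : -1 < μ) {z : ℝ} (hz : 0 < z) :
    HasDerivAt (besselNormal μ) (besselNormalDeriv μ z) z :=
  (Real.hasDerivAt_rpow_const (Or.inl hz.ne')).mul (hasDerivAt_besselReduced hμ z)

theorem hasDerivAt_besselNormalDeriv (hμ : -1 < μ) {z : ℝ} (hz : 0 < z) :
    HasDerivAt (besselNormalDeriv μ)
      (((μ + 1 / 2) * (μ + 1 / 2 - 1) / z ^ 2 - 1) * besselNormal μ z) z :=
  hasDerivAt_deriv_rpow_mul_of_ode hz (hasDerivAt_besselReduced hμ z)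
    (hasDerivAt_besselReducedDeriv hμ hz.ne')

theorem exists_abs_besselNormal_le_of_le_one (hμ : -1 / 2 ≤ μ) :
    ∃ B, ∀ z ∈ Ioc (0 : ℝ) 1, |besselNormal μ z| ≤ B := by
  obtain ⟨B, hB⟩ := isCompact_Icc.exists_bound_of_continuousOn
    ((factorialBounded_besselCoeff (by linarith)).continuous_powerSum.continuousOn
      (s := Icc 0 1))
  refine ⟨B, fun z ⟨hz0, hz1⟩ => ?_⟩
  have hpow : |z ^ (μ + 1 / 2)| ≤ 1 := by
    rw [abs_of_nonneg (by positivity)]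
    exact Real.rpow_le_one hz0.le hz1 (by linarith)
  calc |besselNormal μ z| = |z ^ (μ + 1 / 2)| * |besselReduced μ z| := abs_mul _ _
    _ ≤ 1 * B := by
        gcongr
        exact hB _ ⟨by positivity, by nlinarith⟩
    _ = B := one_mul B

theorem sqrt_mul_besselJ_eq {z : ℝ} (hz : 0 < z) :
    Real.sqrt z * besselJ μ z = besselNormal μ z / 2 ^ μ := by
  have hJ : besselJ μ z = (z / 2) ^ μ * besselReduced μ z := by
    simp only [besselJ, besselReduced, powerSum, besselCoeff, pow_mul]
    ring_nf
  rw [hJ, besselNormal, Real.div_rpow hz.le zero_le_two, Real.sqrt_eq_rpow,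
    Real.rpow_add hz]
  ring

end Bessel

/-- For `μ ≥ -1/2`, the function `z ↦ √z J_μ(z)` is bounded on `(0,∞)`. -/
theorem sqrt_mul_besselJ_bounded (μ : ℝ) (hμ : -1/2 ≤ μ) :
    ∃ C : ℝ, ∀ z > (0 : ℝ), |Real.sqrt z * besselJ μ z| ≤ C := by
  have hμ' : -1 < μ := by linarith
  obtain ⟨B, hB⟩ := exists_abs_besselNormal_le_of_le_one hμ
  obtain ⟨K, hK⟩ : ∃ K, ∀ z ≥ 1, besselNormal μ z ^ 2 ≤ K := ⟨_, fun z hz =>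
    sq_le_of_hasDerivAt_of_ode one_pos
      (fun y hy => hasDerivAt_besselNormal hμ' (one_pos.trans_le hy))
      (fun y hy => hasDerivAt_besselNormalDeriv hμ' (one_pos.trans_le hy)) hz⟩
  refine ⟨max B (Real.sqrt K) / 2 ^ μ, fun z hz => ?_⟩
  rw [sqrt_mul_besselJ_eq hz, abs_div, abs_of_pos (Real.rpow_pos_of_pos two_pos μ)]
  gcongr
  rcases le_or_gt z 1 with hz1 | hz1
  · exact (hB z ⟨hz, hz1⟩).trans (le_max_left _ _)
  · exact (Real.abs_le_sqrt (hK z hz1.le)).trans (le_max_right _ _)
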